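/- arXiv:2510.25712 — 2 statements merged into one kernel-verified Lean document; each statement's English description precedes it below -/
import Mathlib

section
/- Let Δ be a real symmetric p×p matrix with spectral decomposition Δ = V Σ Vᵀ, where Σ = diag(σ₁,…,σ_p) and V is orthogonal. For α > 0, the unique minimizer over positive definite symmetric matrices Ψ of the function Ψ ↦ -log det(Ψ) + (1/(2α))·‖Ψ - Δ‖_F² is V Σ̃ Vᵀ, where Σ̃ is diagonal with entries σ̃ᵢ = (σᵢ + √(σᵢ² + 4α))/2. -/
open Matrix Real

private lemma posDef_conj {p : ℕ} {B A : Matrix (Fin p) (Fin p) ℝ}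
    (hA : A.PosDef) (hB : IsUnit B) : (B * A * Bᵀ).PosDef := by
  have hAt : Aᵀ = A := by
    have := hA.1
    simpa [Matrix.IsHermitian, Matrix.conjTranspose_eq_transpose_of_trivial] using this
  constructor
  · show (B * A * Bᵀ)ᴴ = _
    ext i j
    simp [Matrix.conjTranspose_apply, Matrix.mul_apply, Matrix.transpose_apply, Finset.mul_sum,
      Finset.sum_mul, mul_comm, mul_left_comm]
    rw [Finset.sum_comm]
    refine Finset.sum_congr rfl fun k _ => Finset.sum_congr rfl fun l _ => ?_
    rw [show A k l = A l k from congrFun (congrFun hAt l) k]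
  · intro x hx
    have h0 := (hA.mul_mul_conjTranspose_same (B := B)
      (Matrix.vecMul_injective_iff_isUnit.mpr hB)).2 hx
    simpa [Matrix.conjTranspose_eq_transpose_of_trivial] using h0

private lemma log_det_le_trace {p : ℕ} {M : Matrix (Fin p) (Fin p) ℝ} (hM : M.PosDef) :
    Real.log M.det ≤ M.trace - p := by
  have h := hM.1
  have hpos : ∀ i, 0 < h.eigenvalues i := hM.eigenvalues_pos
  have hdet : M.det = ∏ i, h.eigenvalues i := by simpa using h.det_eq_prod_eigenvalues
  have htr : M.trace = ∑ i, h.eigenvalues i := by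
    simpa using h.trace_eq_sum_eigenvalues
  rw [hdet, htr, Real.log_prod (fun i _ => (hpos i).ne')]
  have hle : ∑ i, Real.log (h.eigenvalues i) ≤ ∑ i, (h.eigenvalues i - 1) :=
    Finset.sum_le_sum fun i _ => Real.log_le_sub_one_of_pos (hpos i)
  have : ∑ i, (h.eigenvalues i - 1) = (∑ i, h.eigenvalues i) - p := by
    rw [Finset.sum_sub_distrib]
    simp
  linarith

theorem prox_neg_log_det_unique_minimizer (p : ℕ) (α : ℝ) (hα : 0 < α)
    (V : Matrix (Fin p) (Fin p) ℝ) (hV : V * Vᵀ = 1 ∧ Vᵀ * V = 1)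
    (σ : Fin p → ℝ) (Δ : Matrix (Fin p) (Fin p) ℝ)
    (hΔ : Δ = V * Matrix.diagonal σ * Vᵀ) :
    let obj : Matrix (Fin p) (Fin p) ℝ → ℝ := fun Ψ =>
      -Real.log Ψ.det + (1 / (2 * α)) * ∑ i, ∑ j, (Ψ i j - Δ i j) ^ 2
    let Ψstar : Matrix (Fin p) (Fin p) ℝ :=
      V * Matrix.diagonal (fun i => (σ i + Real.sqrt ((σ i) ^ 2 + 4 * α)) / 2) * Vᵀ
    Ψstar.PosDef ∧ ∀ Ψ : Matrix (Fin p) (Fin p) ℝ, Ψ.IsSymm → Ψ.PosDef →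
      Ψ ≠ Ψstar → obj Ψstar < obj Ψ := by
  intro obj Ψstar
  obtain ⟨hV1, hV2⟩ := hV
  classical
  set t : Fin p → ℝ := fun i => (σ i + Real.sqrt (σ i ^ 2 + 4 * α)) / 2 with ht
  have hsq : ∀ i, Real.sqrt (σ i ^ 2 + 4 * α) ^ 2 = σ i ^ 2 + 4 * α :=
    fun i => Real.sq_sqrt (by positivity)
  have htpos : ∀ i, 0 < t i := by
    intro i
    have h1 : |σ i| < Real.sqrt (σ i ^ 2 + 4 * α) := by
      have : Real.sqrt (σ i ^ 2) < Real.sqrt (σ i ^ 2 + 4 * α) :=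
        Real.sqrt_lt_sqrt (by positivity) (by nlinarith)
      simpa [Real.sqrt_sq_eq_abs] using this
    have h2 : -σ i ≤ |σ i| := neg_le_abs _
    simp only [ht]
    linarith
  have hkey : ∀ i, t i * (t i - σ i) = α := by
    intro i
    have h1 := hsq i
    simp only [ht]
    nlinarith [h1]
  have hconj_mul : ∀ d e : Fin p → ℝ,
      (V * Matrix.diagonal d * Vᵀ) * (V * Matrix.diagonal e * Vᵀ)
        = V * Matrix.diagonal (fun i => d i * e i) * Vᵀ := by
    intro d e
    simp only [Matrix.mul_assoc]
    rw [← Matrix.mul_assoc Vᵀ V, hV2, Matrix.one_mul,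
      ← Matrix.mul_assoc (Matrix.diagonal d) (Matrix.diagonal e), Matrix.diagonal_mul_diagonal]
  have hconj_transpose : ∀ d : Fin p → ℝ,
      (V * Matrix.diagonal d * Vᵀ)ᵀ = V * Matrix.diagonal d * Vᵀ := by
    intro d
    simp [Matrix.transpose_mul, Matrix.diagonal_transpose, Matrix.mul_assoc]
  have hVunit : IsUnit V := by
    rw [Matrix.isUnit_iff_isUnit_det]
    exact IsUnit.of_mul_eq_one Vᵀ.det (by rw [← Matrix.det_mul, hV1, Matrix.det_one])
  have hPDconj : ∀ d : Fin p → ℝ, (∀ i, 0 < d i) → (V * Matrix.diagonal d * Vᵀ).PosDef :=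
    fun d hd => posDef_conj (Matrix.PosDef.diagonal hd) hVunit
  have hΨse : Ψstar = V * Matrix.diagonal t * Vᵀ := rfl
  have hΨsPD : Ψstar.PosDef := by rw [hΨse]; exact hPDconj t htpos
  refine ⟨hΨsPD, ?_⟩
  intro Ψ hΨsymm hΨPD hne
  set W : Matrix (Fin p) (Fin p) ℝ := V * Matrix.diagonal (fun i => (t i)⁻¹) * Vᵀ with hW
  set R : Matrix (Fin p) (Fin p) ℝ :=
    V * Matrix.diagonal (fun i => (Real.sqrt (t i))⁻¹) * Vᵀ with hR
  have hΨsW : Ψstar * W = 1 := by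
    rw [hΨse, hW, hconj_mul]
    have h1 : (fun i => t i * (t i)⁻¹) = fun _ => (1 : ℝ) :=
      funext fun i => mul_inv_cancel₀ (htpos i).ne'
    rw [h1, Matrix.diagonal_one, Matrix.mul_one, hV1]
  have hWΨs : W * Ψstar = 1 := by
    rw [hΨse, hW, hconj_mul]
    have h1 : (fun i => (t i)⁻¹ * t i) = fun _ => (1 : ℝ) :=
      funext fun i => inv_mul_cancel₀ (htpos i).ne'
    rw [h1, Matrix.diagonal_one, Matrix.mul_one, hV1]
  have hRR : R * R = W := by
    rw [hR, hW, hconj_mul]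
    have h1 : (fun i => (Real.sqrt (t i))⁻¹ * (Real.sqrt (t i))⁻¹) = fun i => (t i)⁻¹ :=
      funext fun i => by rw [← mul_inv, Real.mul_self_sqrt (htpos i).le]
    rw [h1]
  have hRt : Rᵀ = R := hconj_transpose _
  have hRunit : IsUnit R := by
    have h2 : R * (V * Matrix.diagonal (fun i => Real.sqrt (t i)) * Vᵀ) = 1 := by
      rw [hR, hconj_mul]
      have h1 : (fun i => (Real.sqrt (t i))⁻¹ * Real.sqrt (t i)) = fun _ => (1 : ℝ) :=
        funext fun i => inv_mul_cancel₀ (Real.sqrt_pos.mpr (htpos i)).ne'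
      rw [h1, Matrix.diagonal_one, Matrix.mul_one, hV1]
    rw [Matrix.isUnit_iff_isUnit_det]
    exact IsUnit.of_mul_eq_one _ (by rw [← Matrix.det_mul, h2, Matrix.det_one])
  have hΨsSub : Ψstar - Δ = α • W := by
    have e1 : Ψstar - Δ = V * Matrix.diagonal (fun i => t i - σ i) * Vᵀ := by
      rw [hΨse, hΔ, ← Matrix.sub_mul, ← Matrix.mul_sub, ← Matrix.diagonal_sub]
    have e2 : α • W = V * Matrix.diagonal (fun i => α * (t i)⁻¹) * Vᵀ := by
      rw [hW, ← Matrix.smul_mul, ← Matrix.mul_smul]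
      congr 2
      ext i j
      by_cases h : i = j <;> simp [Matrix.diagonal, h]
    rw [e1, e2]
    have h1 : (fun i => t i - σ i) = fun i => α * (t i)⁻¹ := by
      funext i
      have h0 : t i ≠ 0 := (htpos i).ne'
      field_simp
      linear_combination hkey i
    rw [h1]
  have hΨssymm : Ψstarᵀ = Ψstar := by rw [hΨse]; exact hconj_transpose t
  set M := R * Ψ * R with hM
  have hMPD : M.PosDef := by
    have := posDef_conj hΨPD hRunit
    rw [hRt] at this
    exact this
  have hdetΨs : 0 < Ψstar.det := hΨsPD.det_pos
  have hdetΨ : 0 < Ψ.det := hΨPD.det_pos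
  have hdetW : W.det = (Ψstar.det)⁻¹ := by
    have h1 : W.det * Ψstar.det = 1 := by rw [← Matrix.det_mul, hWΨs, Matrix.det_one]
    exact eq_inv_of_mul_eq_one_left h1
  have hMdet : M.det = W.det * Ψ.det := by
    have h1 : W.det = R.det * R.det := by rw [← Matrix.det_mul, hRR]
    rw [hM, Matrix.det_mul, Matrix.det_mul, h1]
    ring
  have hMtr : M.trace = (W * Ψ).trace := by
    rw [hM, Matrix.trace_mul_comm, ← Matrix.mul_assoc, hRR]
  have hlog : Real.log Ψ.det - Real.log Ψstar.det ≤ (W * Ψ).trace - p := by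
    have h1 := log_det_le_trace hMPD
    rw [hMdet, hMtr, hdetW, Real.log_mul (inv_ne_zero hdetΨs.ne') hdetΨ.ne',
      Real.log_inv] at h1
    linarith
  set S1 := ∑ i, ∑ j, (Ψ i j - Ψstar i j) ^ 2 with hS1
  set S0 := ∑ i, ∑ j, (Ψstar i j - Δ i j) ^ 2 with hS0
  set T := ∑ i, ∑ j, (Ψstar i j - Δ i j) * (Ψ i j - Ψstar i j) with hTdef
  have hexpand : ∑ i, ∑ j, (Ψ i j - Δ i j) ^ 2 = S1 + 2 * T + S0 := by
    rw [hS1, hS0, hTdef, Finset.mul_sum, ← Finset.sum_add_distrib, ← Finset.sum_add_distrib]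
    refine Finset.sum_congr rfl fun i _ => ?_
    rw [Finset.mul_sum, ← Finset.sum_add_distrib, ← Finset.sum_add_distrib]
    exact Finset.sum_congr rfl fun j _ => by ring
  have hCsymm : ∀ i j : Fin p, Ψ j i - Ψstar j i = Ψ i j - Ψstar i j := by
    intro i j
    have h1 : Ψ j i = Ψ i j := congrFun (congrFun hΨsymm i) j
    have h2 : Ψstar j i = Ψstar i j := congrFun (congrFun hΨssymm i) j
    rw [h1, h2]
  have hTtr : T = Matrix.trace ((Ψstar - Δ) * (Ψ - Ψstar)) := by
    rw [hTdef, Matrix.trace]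
    simp only [Matrix.diag, Matrix.mul_apply, Matrix.sub_apply]
    refine Finset.sum_congr rfl fun i _ => Finset.sum_congr rfl fun j _ => ?_
    rw [hCsymm i j]
  have hTval : T = α * ((W * Ψ).trace - p) := by
    rw [hTtr, hΨsSub, Matrix.smul_mul, Matrix.trace_smul, Matrix.mul_sub, Matrix.trace_sub,
      hWΨs, Matrix.trace_one]
    simp [smul_eq_mul, Fintype.card_fin]
  have hS1pos : 0 < S1 := by
    have hex : ∃ i j, Ψ i j ≠ Ψstar i j := by
      by_contra h
      push_neg at h
      exact hne (Matrix.ext fun i j => h i j)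
    obtain ⟨i0, j0, hij⟩ := hex
    rw [hS1]
    refine Finset.sum_pos' (fun i _ => Finset.sum_nonneg fun j _ => sq_nonneg _)
      ⟨i0, Finset.mem_univ _, ?_⟩
    refine Finset.sum_pos' (fun j _ => sq_nonneg _) ⟨j0, Finset.mem_univ _, ?_⟩
    have hne0 : Ψ i0 j0 - Ψstar i0 j0 ≠ 0 := sub_ne_zero_of_ne hij
    exact lt_of_le_of_ne (sq_nonneg _) (Ne.symm (pow_ne_zero 2 hne0))
  have hobjΨ : obj Ψ = -Real.log Ψ.det + (1 / (2 * α)) * (S1 + 2 * T + S0) := by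
    rw [show obj Ψ = -Real.log Ψ.det + (1 / (2 * α)) * ∑ i, ∑ j, (Ψ i j - Δ i j) ^ 2 from rfl,
      hexpand]
  have hobjΨs : obj Ψstar = -Real.log Ψstar.det + (1 / (2 * α)) * S0 := rfl
  rw [hobjΨ, hobjΨs, hTval]
  have hαne : (2 * α) ≠ 0 := by positivity
  have hfinal : (1 / (2 * α)) * (S1 + 2 * (α * ((W * Ψ).trace - p)) + S0)
      = (1 / (2 * α)) * S1 + ((W * Ψ).trace - p) + (1 / (2 * α)) * S0 := by
    field_simp
  have hpos1 : 0 < (1 / (2 * α)) * S1 :=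
    mul_pos (by positivity) hS1pos
  linarith [hfinal, hlog, hpos1]
end

section
/- Consider the p = 2 case with S the all-ones 2×2 matrix, penalty ρ = 0, and parameter c. The PCGLASSO objective in the parameterization (ξ₁, ξ₂, δ) with ξ₁, ξ₂ > 0 and δ ∈ (-1,1) is F(ξ₁,ξ₂,δ) = -log(1-δ²) - 2c(log ξ₁ + log ξ₂) + ξ₁² + ξ₂² + 2δξ₁ξ₂. If c ≥ 1/2, then F is unbounded below (no minimizer exists): along the path ξ₁ = ξ₂ = t, δ = -1 + 1/t², the objective tends to -∞ as t → ∞ when c > 1/2. -/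
open Real Filter

theorem pcglasso_p2_unbounded_below (c : ℝ) (hc : 1 / 2 < c) :
    let F : ℝ → ℝ → ℝ → ℝ := fun ξ₁ ξ₂ δ =>
      -Real.log (1 - δ ^ 2) - 2 * c * (Real.log ξ₁ + Real.log ξ₂) +
        ξ₁ ^ 2 + ξ₂ ^ 2 + 2 * δ * ξ₁ * ξ₂
    Tendsto (fun t : ℝ => F t t (-1 + 1 / t ^ 2)) atTop atBot ∧
    ¬ BddBelow ((fun q : ℝ × ℝ × ℝ => F q.1 q.2.1 q.2.2) ''
      {q : ℝ × ℝ × ℝ | 0 < q.1 ∧ 0 < q.2.1 ∧ |q.2.2| < 1}) := by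
  intro F
  -- the simplified formula on t > 1
  have heq : ∀ᶠ t : ℝ in atTop,
      F t t (-1 + 1 / t ^ 2)
        = (2 - 4 * c) * Real.log t - Real.log (2 - 1 / t ^ 2) + 2 := by
    filter_upwards [eventually_gt_atTop (1 : ℝ)] with t ht
    have ht0 : (0 : ℝ) < t := by linarith
    have ht2 : (0 : ℝ) < t ^ 2 := by positivity
    have h1 : (0 : ℝ) < 2 - 1 / t ^ 2 := by
      have : 1 / t ^ 2 < 1 := by
        rw [div_lt_one ht2]; nlinarith
      linarith
    have hδ : 1 - (-1 + 1 / t ^ 2) ^ 2 = (2 - 1 / t ^ 2) * (1 / t ^ 2) := by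
      field_simp; ring
    have hlog : Real.log (1 - (-1 + 1 / t ^ 2) ^ 2)
        = Real.log (2 - 1 / t ^ 2) - 2 * Real.log t := by
      rw [hδ, Real.log_mul (ne_of_gt h1) (by positivity), one_div,
        Real.log_inv, Real.log_pow]
      push_cast; ring
    show -Real.log (1 - (-1 + 1 / t ^ 2) ^ 2) - 2 * c * (Real.log t + Real.log t)
        + t ^ 2 + t ^ 2 + 2 * (-1 + 1 / t ^ 2) * t * t = _
    rw [hlog]
    have : 2 * (-1 + 1 / t ^ 2) * t * t = -2 * t ^ 2 + 2 := by
      field_simp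
    rw [this]; ring
  have hT : Tendsto (fun t : ℝ => F t t (-1 + 1 / t ^ 2)) atTop atBot := by
    have h1 : Tendsto (fun t : ℝ => (2 - 4 * c) * Real.log t) atTop atBot :=
      Real.tendsto_log_atTop.const_mul_atTop_of_neg (by linarith)
    have hinv : Tendsto (fun t : ℝ => 2 - 1 / t ^ 2) atTop (nhds 2) := by
      have h : Tendsto (fun t : ℝ => t ^ 2) atTop atTop := tendsto_pow_atTop (by norm_num)
      have h0 : Tendsto (fun t : ℝ => 1 / t ^ 2) atTop (nhds 0) := by
        simpa [one_div, Pi.inv_def] using h.inv_tendsto_atTop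
      simpa using (tendsto_const_nhds (x := (2:ℝ)) (f := atTop)).sub h0
    have h2 : Tendsto (fun t : ℝ => 2 - Real.log (2 - 1 / t ^ 2)) atTop
        (nhds (2 - Real.log 2)) :=
      (tendsto_const_nhds (x := (2:ℝ)) (f := atTop)).sub
        (((Real.continuousAt_log (by norm_num)).tendsto).comp hinv)
    have h3 : Tendsto (fun t : ℝ =>
        (2 - Real.log (2 - 1 / t ^ 2)) + (2 - 4 * c) * Real.log t) atTop atBot :=
      h2.add_atBot h1
    have h4 : Tendsto (fun t : ℝ =>
        (2 - 4 * c) * Real.log t - Real.log (2 - 1 / t ^ 2) + 2) atTop atBot :=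
      h3.congr fun t => by ring
    exact Tendsto.congr' (Filter.EventuallyEq.symm heq) h4
  refine ⟨hT, ?_⟩
  rintro ⟨b, hb⟩
  have hev := (hT.eventually (eventually_lt_atBot b)).and (eventually_gt_atTop (1 : ℝ))
  obtain ⟨t, hlt, ht⟩ := hev.exists
  have hmem : F t t (-1 + 1 / t ^ 2) ∈
      ((fun q : ℝ × ℝ × ℝ => F q.1 q.2.1 q.2.2) ''
        {q : ℝ × ℝ × ℝ | 0 < q.1 ∧ 0 < q.2.1 ∧ |q.2.2| < 1}) := by
    refine ⟨(t, t, -1 + 1 / t ^ 2), ⟨by linarith, by linarith, ?_⟩, rfl⟩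
    have ht2 : (1 : ℝ) < t ^ 2 := by nlinarith
    have h01 : 0 < 1 / t ^ 2 := by positivity
    have h1 : 1 / t ^ 2 < 1 := by rw [div_lt_one (by positivity)]; exact ht2
    rw [abs_lt]; constructor <;> linarith
  exact absurd (hb hmem) (not_le.mpr hlt)
end
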